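/- arXiv:math/0608749 — 6 statements merged into one kernel-verified Lean document; each statement's English description precedes it below -/
import Mathlib

section
/- Let (V,⟨·,·⟩) be a finite-dimensional real inner product space, J an Hermitian almost complex structure (an isometry with J² = -id), and R an algebraic curvature tensor on V. The following are equivalent: (1) R(x,y,z,t) = R(Jx,Jy,Jz,Jt) for all x,y,z,t ∈ V; (2) the complex Jacobi operator 𝒥_R(π_x) := 𝒥_R(x) + 𝒥_R(Jx) commutes with J for every unit vector x. -/
/-!
Write `T(x,y,z,t) = R(x,y,z,t) - R(Jx,Jy,Jz,Jt)`, so that `T(J·,J·,J·,J·) = -T`. As `J` is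
skew-adjoint, `𝒥_R(x) + 𝒥_R(Jx)` commutes with `J` iff `T(Jy,x,x,z) + T(y,x,x,Jz) = 0` for all
`y, z`; this is homogeneous in `x`, so unit vectors suffice. Together with `T ∘ J = -T` it gives
`T(y,x,x,z) = -T(y,Jx,Jx,z)`. Polarizing, `P(y,x,w,z) = T(y,x,w,z) + T(y,w,x,z)` changes sign
under `(x,w) ↦ (Jx,Jw)` and satisfies `P(y,x,w,z) = P(x,y,z,w)`, and these two symmetries force
`P = 0`. Finally a tensor with the symmetries of a curvature tensor is determined by the values
`T(y,x,x,z)`, so `T = 0`.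
-/

open RealInnerProductSpace

variable {V : Type*} [NormedAddCommGroup V] [InnerProductSpace ℝ V] [FiniteDimensional ℝ V]

/-- The Jacobi operator of an algebraic curvature tensor, characterized by
`⟪jacobiOp R x y, z⟫ = R y x x z`. -/
noncomputable def jacobiOp (R : V →ₗ[ℝ] V →ₗ[ℝ] V →ₗ[ℝ] V →ₗ[ℝ] ℝ) (x : V) :
    V →ₗ[ℝ] V where
  toFun y := (InnerProductSpace.toDual ℝ V).symm (LinearMap.toContinuousLinearMap (R y x x))
  map_add' y₁ y₂ := by simp [map_add]
  map_smul' c y := by simp [map_smul]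

section CurvatureTensor

variable {E : Type*} [AddCommGroup E] [Module ℝ E]

structure IsAlgCurvatureTensor (R : E →ₗ[ℝ] E →ₗ[ℝ] E →ₗ[ℝ] E →ₗ[ℝ] ℝ) : Prop where
  antisymm_left : ∀ x y z t : E, R x y z t = - R y x z t
  pair_symm : ∀ x y z t : E, R x y z t = R z t x y
  bianchi : ∀ x y z t : E, R x y z t + R y z x t + R z x y t = 0

def curvPullback (J : E →ₗ[ℝ] E) (R : E →ₗ[ℝ] E →ₗ[ℝ] E →ₗ[ℝ] E →ₗ[ℝ] ℝ) :
    E →ₗ[ℝ] E →ₗ[ℝ] E →ₗ[ℝ] E →ₗ[ℝ] ℝ :=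
  (R.compl₁₂ J J).compr₂
    (LinearMap.llcomp ℝ E (E →ₗ[ℝ] ℝ) (E →ₗ[ℝ] ℝ) (LinearMap.lcomp ℝ ℝ J) ∘ₗ
      LinearMap.lcomp ℝ (E →ₗ[ℝ] ℝ) J)

@[simp]
theorem curvPullback_apply (J : E →ₗ[ℝ] E) (R : E →ₗ[ℝ] E →ₗ[ℝ] E →ₗ[ℝ] E →ₗ[ℝ] ℝ)
    (x y z t : E) : curvPullback J R x y z t = R (J x) (J y) (J z) (J t) :=
  rfl

-- `map_neg` does not fire in the first slot: instance search misses `AddCommGroup` on the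
-- space of trilinear forms.
theorem LinearMap.map_neg_left₄ (R : E →ₗ[ℝ] E →ₗ[ℝ] E →ₗ[ℝ] E →ₗ[ℝ] ℝ) (a b c d : E) :
    R (-a) b c d = -R a b c d := by
  rw [← neg_one_smul ℝ a, map_smul]
  simp

namespace IsAlgCurvatureTensor

variable {R S : E →ₗ[ℝ] E →ₗ[ℝ] E →ₗ[ℝ] E →ₗ[ℝ] ℝ}

theorem antisymm_right (hR : IsAlgCurvatureTensor R) (x y z t : E) :
    R x y z t = - R x y t z := by
  rw [hR.pair_symm, hR.antisymm_left, hR.pair_symm t]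

theorem curvPullback (hR : IsAlgCurvatureTensor R) (J : E →ₗ[ℝ] E) :
    IsAlgCurvatureTensor (curvPullback J R) where
  antisymm_left _ _ _ _ := hR.antisymm_left ..
  pair_symm _ _ _ _ := hR.pair_symm ..
  bianchi _ _ _ _ := hR.bianchi ..

theorem ext_of_apply_self (hR : IsAlgCurvatureTensor R) (hS : IsAlgCurvatureTensor S)
    (h : ∀ y x z : E, R y x x z = S y x x z) : R = S := by
  have hskew : ∀ y x w z : E, R y x w z - S y x w z = -(R y w x z - S y w x z) := by
    intro y x w z
    have hxw := h y (x + w) z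
    simp only [map_add, LinearMap.add_apply] at hxw
    linarith [h y x z, h y w z]
  ext a b c d
  linarith [hskew b c a d, hskew a c b d, hR.antisymm_left b a c d, hS.antisymm_left b a c d,
    hR.antisymm_left c a b d, hS.antisymm_left c a b d, hR.bianchi a b c d, hS.bianchi a b c d]

theorem invariant_of_complexJacobi (hR : IsAlgCurvatureTensor R) {J : E →ₗ[ℝ] E}
    (hJ : ∀ v, J (J v) = -v)
    (h : ∀ x y z : E,
      R (J y) x x z + R (J y) (J x) (J x) z + R y x x (J z) + R y (J x) (J x) (J z) = 0)
    (x y z t : E) : R x y z t = R (J x) (J y) (J z) (J t) := by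
  set T : E → E → E → E → ℝ := fun a b c d => R a b c d - R (J a) (J b) (J c) (J d) with hT
  have hTJ : ∀ a b c d, T (J a) (J b) (J c) (J d) = -T a b c d := by
    intro a b c d
    simp only [hT, hJ, LinearMap.map_neg_left₄, map_neg, LinearMap.neg_apply, neg_neg]
    ring
  have hdiag : ∀ y x z, T y x x z = -T y (J x) (J x) z := by
    intro y x z
    have := h x (J y) z
    simp only [hT, hJ, LinearMap.map_neg_left₄, map_neg, LinearMap.neg_apply, neg_neg] at this ⊢
    linarith
  set P : E → E → E → E → ℝ := fun y x w z => T y x w z + T y w x z with hP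
  have hPJ : ∀ y x w z, P y x w z = -P y (J x) (J w) z := by
    intro y x w z
    have := hdiag y (x + w) z
    simp only [hT, hP, map_add, LinearMap.add_apply] at this ⊢
    linarith [hdiag y x z, hdiag y w z]
  have hPswap : ∀ y x w z, P y x w z = P x y z w := by
    intro y x w z
    simp only [hT, hP]
    linarith [hR.antisymm_left y x w z, hR.antisymm_left (J y) (J x) (J w) (J z),
      hR.antisymm_right x y w z, hR.antisymm_right (J x) (J y) (J w) (J z),
      hR.pair_symm y w x z, hR.pair_symm (J y) (J w) (J x) (J z)]
  have hP₀ : ∀ y x w z, P y x w z = 0 := by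
    intro y x w z
    have hPJ₄ : P (J y) (J x) (J w) (J z) = -P y x w z := by
      simp only [hP, hTJ]
      ring
    -- P(y,x,w,z) = -P(y,Jx,Jw,z) = -P(Jx,y,z,Jw) = P(Jx,Jy,Jz,Jw) = P(Jy,Jx,Jw,Jz) = -P(y,x,w,z)
    linarith [hPJ y x w z, hPswap y (J x) (J w) z, hPJ (J x) y z (J w),
      hPswap (J y) (J x) (J w) (J z)]
  have hJR := (hR.curvPullback J).ext_of_apply_self hR fun y x z => by
    have := hP₀ y x x z
    simp only [hP, hT] at this
    simp only [curvPullback_apply]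
    linarith
  exact congr($hJR x y z t).symm

theorem invariant_iff (hR : IsAlgCurvatureTensor R) {J : E →ₗ[ℝ] E} (hJ : ∀ v, J (J v) = -v) :
    (∀ x y z t : E, R x y z t = R (J x) (J y) (J z) (J t)) ↔ ∀ x y z : E,
      R (J y) x x z + R (J y) (J x) (J x) z + R y x x (J z) + R y (J x) (J x) (J z) = 0 := by
  refine ⟨fun hJR x y z => ?_, hR.invariant_of_complexJacobi hJ⟩
  have h₁ := hJR (J y) x x z
  have h₂ := hJR (J y) (J x) (J x) z
  simp only [hJ, LinearMap.map_neg_left₄, map_neg, LinearMap.neg_apply, neg_neg] at h₁ h₂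
  linarith

end IsAlgCurvatureTensor

end CurvatureTensor

section JacobiOperator

variable (R : V →ₗ[ℝ] V →ₗ[ℝ] V →ₗ[ℝ] V →ₗ[ℝ] ℝ)

@[simp]
theorem jacobiOp_inner (x y z : V) : ⟪jacobiOp R x y, z⟫ = R y x x z := by
  simp [jacobiOp, InnerProductSpace.toDual_symm_apply]

theorem jacobiOp_smul (c : ℝ) (x : V) : jacobiOp R (c • x) = (c * c) • jacobiOp R x := by
  ext y
  refine ext_inner_right ℝ fun z => ?_
  simp only [jacobiOp_inner, LinearMap.smul_apply, inner_smul_left, map_smul, smul_eq_mul,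
    RCLike.conj_to_real]
  ring

variable {R} {J : V →ₗ[ℝ] V}

theorem complexJacobi_comm_iff (hJ : ∀ v w : V, ⟪J v, w⟫ = -⟪v, J w⟫) (x : V) :
    (jacobiOp R x + jacobiOp R (J x)) ∘ₗ J = J ∘ₗ (jacobiOp R x + jacobiOp R (J x)) ↔
      ∀ y z : V,
        R (J y) x x z + R (J y) (J x) (J x) z + R y x x (J z) + R y (J x) (J x) (J z) = 0 := by
  constructor
  · intro hJx y z
    have := congr(⟪$hJx y, z⟫)
    simp only [LinearMap.comp_apply, LinearMap.add_apply, hJ, inner_add_left, jacobiOp_inner]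
      at this
    linarith
  · intro h
    ext y
    refine ext_inner_right ℝ fun z => ?_
    simp only [LinearMap.comp_apply, LinearMap.add_apply, hJ, inner_add_left, jacobiOp_inner]
    linarith [h y z]

theorem complexJacobi_comm_of_norm_eq_one
    (h : ∀ x : V, ‖x‖ = 1 →
      (jacobiOp R x + jacobiOp R (J x)) ∘ₗ J = J ∘ₗ (jacobiOp R x + jacobiOp R (J x)))
    (x : V) : (jacobiOp R x + jacobiOp R (J x)) ∘ₗ J = J ∘ₗ (jacobiOp R x + jacobiOp R (J x)) := by
  rcases eq_or_ne x 0 with rfl | hx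
  · have h₀ : jacobiOp R 0 = 0 := by simpa using jacobiOp_smul R 0 0
    simp [h₀]
  have hscale : ∀ (c : ℝ) (u : V), ‖u‖ = 1 →
      (jacobiOp R (c • u) + jacobiOp R (J (c • u))) ∘ₗ J =
        J ∘ₗ (jacobiOp R (c • u) + jacobiOp R (J (c • u))) := by
    intro c u hu
    rw [map_smul, jacobiOp_smul, jacobiOp_smul, ← smul_add, LinearMap.smul_comp,
      LinearMap.comp_smul, h u hu]
  simpa only [smul_inv_smul₀ (norm_ne_zero_iff.2 hx)] using
    hscale ‖x‖ (‖x‖⁻¹ • x) (norm_smul_inv_norm hx)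

end JacobiOperator

/-- Compatibility of `R` and `J` is equivalent to the complex Jacobi operator
`𝒥_R(π_x) = 𝒥_R(x) + 𝒥_R(Jx)` being complex linear for every unit `x`. -/
theorem stmt_3 (J : V →ₗ[ℝ] V)
    (hJiso : ∀ x y : V, ⟪J x, J y⟫ = ⟪x, y⟫) (hJ2 : J ∘ₗ J = -LinearMap.id)
    (R : V →ₗ[ℝ] V →ₗ[ℝ] V →ₗ[ℝ] V →ₗ[ℝ] ℝ)
    (hanti : ∀ x y z t : V, R x y z t = - R y x z t)
    (hpair : ∀ x y z t : V, R x y z t = R z t x y)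
    (hbianchi : ∀ x y z t : V, R x y z t + R y z x t + R z x y t = 0) :
    (∀ x y z t : V, R x y z t = R (J x) (J y) (J z) (J t)) ↔
    (∀ x : V, ‖x‖ = 1 →
      (jacobiOp R x + jacobiOp R (J x)) ∘ₗ J = J ∘ₗ (jacobiOp R x + jacobiOp R (J x))) := by
  have hJJ : ∀ v, J (J v) = -v := fun v => by simpa using LinearMap.congr_fun hJ2 v
  have hJskew : ∀ v w : V, ⟪J v, w⟫ = -⟪v, J w⟫ := fun v w => by
    rw [← hJiso v (J w), hJJ, inner_neg_right, neg_neg]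
  rw [IsAlgCurvatureTensor.invariant_iff ⟨hanti, hpair, hbianchi⟩ hJJ]
  simp only [← complexJacobi_comm_iff hJskew]
  exact ⟨fun h x _ => h x, complexJacobi_comm_of_norm_eq_one⟩
end

section
/- Let V, W be finite-dimensional real vector spaces and T₁,…,T_κ : V → W linear maps such that every nonzero linear combination a₁T₁ + … + a_κT_κ has rank at least μ. If μ ≥ κ, then there exists x ∈ V such that T₁x, …, T_κx are linearly independent. -/
/-!
Choose `x₀` maximising the rank of `T₁x₀, …, T_κx₀` and suppose these vectors satisfy a
relation `∑ aᵢ Tᵢx₀ = 0` with `a ≠ 0`. Then `S = ∑ aᵢ Tᵢ` has rank at least `κ`, which exceeds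
the rank at `x₀`, so some `S y` lies outside `U = span {Tᵢx₀}`. Since
`∑ aᵢ Tᵢ(x₀ + t y) = t S y`, the span of the `Tᵢ(x₀ + t y)` contains `S y` for `t ≠ 0`, and it
also contains the perturbation of a basis of `U` chosen among the `Tᵢx₀`. Linear independence
is an open condition, so for small `t ≠ 0` this basis together with `S y` stays independent,
and the rank at `x₀ + t y` exceeds the rank at `x₀`.
-/

open Module Submodule Filter Topology

section Perturbation

variable {𝕜 W ι : Type*} [NontriviallyNormedField 𝕜] [CompleteSpace 𝕜]
  [AddCommGroup W] [Module 𝕜 W] [FiniteDimensional 𝕜 W]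

theorem LinearIndependent.eventually_add_smul [Finite ι] {v : ι → W}
    (hv : LinearIndependent 𝕜 v) (w : ι → W) :
    ∀ᶠ t in 𝓝 (0 : 𝕜), LinearIndependent 𝕜 (v + t • w) := by
  let e := (finBasis 𝕜 W).equivFun
  have hcont : Continuous fun t : 𝕜 => e ∘ v + t • (e ∘ w) := by fun_prop
  have htendsto : Tendsto (fun t : 𝕜 => e ∘ v + t • (e ∘ w)) (𝓝 0) (𝓝 (e ∘ v)) := by
    simpa using hcont.tendsto 0
  filter_upwards [htendsto.eventually (hv.map' e.toLinearMap e.ker).eventually] with t ht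
  have hcomp : e ∘ (v + t • w) = e ∘ v + t • (e ∘ w) := by ext; simp
  exact .of_comp e.toLinearMap (hcomp ▸ ht)

theorem exists_finrank_lt_finrank_add_smul [Fintype ι] (v w : ι → W) (a : ι → 𝕜)
    (ha : ∑ i, a i • v i = 0) (hz : ∑ i, a i • w i ∉ span 𝕜 (Set.range v)) :
    ∃ t : 𝕜, (Set.range v).finrank 𝕜 < (Set.range (v + t • w)).finrank 𝕜 := by
  obtain ⟨β, b, hb, hspan, hli⟩ := exists_linearIndependent' 𝕜 v
  have := Finite.of_injective b hb
  have := Fintype.ofFinite β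
  set z := ∑ i, a i • w i
  let v' : Option β → W := fun o => Option.casesOn' o z (v ∘ b)
  let w' : Option β → W := fun o => Option.casesOn' o 0 (w ∘ b)
  have hli' : LinearIndependent 𝕜 v' := hli.option (hspan ▸ hz)
  obtain ⟨t, hlit, ht⟩ :=
    ((hli'.eventually_add_smul w').filter_mono nhdsWithin_le_nhds).and self_mem_nhdsWithin
      |>.exists (f := 𝓝[≠] (0 : 𝕜))
  refine ⟨t, ?_⟩
  have hsum : ∑ i, a i • (v + t • w) i = t • z := by
    simp only [Pi.add_apply, Pi.smul_apply, smul_add, smul_comm (a _) t, Finset.sum_add_distrib,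
      ha, zero_add, z, Finset.smul_sum]
  have hle : span 𝕜 (Set.range (v' + t • w')) ≤ span 𝕜 (Set.range (v + t • w)) := by
    rw [span_le]
    rintro _ ⟨_ | j, rfl⟩
    · refine (smul_mem_iff _ (Set.mem_compl_singleton_iff.mp ht)).mp ?_
      simpa [v', w', ← hsum] using
        sum_smul_mem (span 𝕜 (Set.range (v + t • w))) a fun i _ => subset_span ⟨i, rfl⟩
    · exact subset_span ⟨b j, rfl⟩
  calc (Set.range v).finrank 𝕜 = Fintype.card β := by
        rw [Set.finrank, ← hspan, finrank_span_eq_card hli]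
    _ < Fintype.card (Option β) := by simp
    _ = finrank 𝕜 (span 𝕜 (Set.range (v' + t • w'))) := (finrank_span_eq_card hlit).symm
    _ ≤ (Set.range (v + t • w)).finrank 𝕜 := finrank_mono hle

end Perturbation

theorem stmt_5_general {V W : Type*} [AddCommGroup V] [Module ℝ V] [AddCommGroup W] [Module ℝ W]
    [FiniteDimensional ℝ W]
    {κ μ : ℕ} (T : Fin κ → (V →ₗ[ℝ] W))
    (hrank : ∀ a : Fin κ → ℝ, a ≠ 0 →
      μ ≤ Module.finrank ℝ (LinearMap.range (∑ i, a i • T i)))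
    (hμ : κ ≤ μ) :
    ∃ x : V, LinearIndependent ℝ (fun i => T i x) := by
  let d : V → ℕ := fun x => (Set.range fun i => T i x).finrank ℝ
  have hdκ (x : V) : d x ≤ κ := by simpa using finrank_range_le_card (R := ℝ) fun i => T i x
  obtain ⟨_, ⟨x₀, rfl⟩, hmax⟩ : ∃ n, IsGreatest (Set.range d) n :=
    BddAbove.exists_isGreatest_of_nonempty ⟨κ, by rintro _ ⟨x, rfl⟩; exact hdκ x⟩
      (Set.range_nonempty d)
  by_contra! hdep
  obtain ⟨a, ha, i₀, hi₀⟩ := Fintype.not_linearIndependent_iff.mp (hdep x₀)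
  have hdκ₀ : d x₀ ≠ κ := by
    simpa [d, linearIndependent_iff_card_eq_finrank_span, eq_comm] using hdep x₀
  have hlt : d x₀ < finrank ℝ (LinearMap.range (∑ i, a i • T i)) := by
    have hμS := hrank a fun h => hi₀ (by simp [h])
    have := hdκ x₀
    omega
  obtain ⟨_, ⟨y, rfl⟩, hy⟩ := SetLike.not_le_iff_exists.mp fun h => (finrank_mono h).not_gt hlt
  obtain ⟨t, ht⟩ := exists_finrank_lt_finrank_add_smul (fun i => T i x₀) (fun i => T i y) a ha
    (by simpa using hy)
  exact (hmax ⟨x₀ + t • y, by simp only [d, map_add, map_smul]; rfl⟩).not_gt ht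

/-- If every nonzero linear combination of `T₁,…,T_κ` has rank at least `μ ≥ κ`,
then there is `x` with `T₁x,…,T_κx` linearly independent. -/
theorem stmt_5 {V W : Type*} [AddCommGroup V] [Module ℝ V] [AddCommGroup W] [Module ℝ W]
    [FiniteDimensional ℝ V] [FiniteDimensional ℝ W]
    {κ μ : ℕ} (T : Fin κ → (V →ₗ[ℝ] W))
    (hrank : ∀ a : Fin κ → ℝ, a ≠ 0 →
      μ ≤ Module.finrank ℝ (LinearMap.range (∑ i, a i • T i)))
    (hμ : κ ≤ μ) :
    ∃ x : V, LinearIndependent ℝ (fun i => T i x) :=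
  stmt_5_general T hrank hμ
end

section
/- Let {J₁,…,J_κ} be a Clifford family on a finite-dimensional real inner product space V of dimension n. If a linear combination S := Σ_{j<k} a_{jk} J_jJ_k has some nonzero coefficient a_{jk}, then Rank(S) ≥ n/2. -/
/-!
Choose `j₀ < k₀` with `a j₀ k₀ ≠ 0`. Conjugation by `J j₀` fixes the products `J j₀ J k` and
`J j J j₀` and negates every `J j J k` with `j, k ≠ j₀`, so `S + J j₀ S J j₀ = 2 J j₀ L` with
`L = ∑ k, b k • J k` and `b k₀ = a j₀ k₀`. Since the vectors `J k x` are pairwise orthogonal of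
norm `‖x‖`, `L` is `|b|` times an isometry, hence injective. Thus
`n = rank (S + J j₀ S J j₀) ≤ rank S + rank (J j₀ S J j₀) ≤ 2 rank S`.
-/

open RealInnerProductSpace

section CliffordRelations

variable {A : Type*} [Ring A] {ι : Type*} (e : ι → A)

theorem clifford_mul_add_conj [DecidableEq ι]
    (hsq : ∀ i, e i * e i = -1) (hanti : ∀ i j, i ≠ j → e i * e j + e j * e i = 0)
    (i₀ j k : ι) :
    e j * e k + e i₀ * (e j * e k) * e i₀
      = 2 * e i₀ * ((if j = i₀ then e k else 0) - (if k = i₀ then e j else 0)) := by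
  have hcomm : ∀ i j, i ≠ j → e i * e j = -(e j * e i) :=
    fun i j h => eq_neg_of_add_eq_zero_left (hanti i j h)
  have regroup : e i₀ * (e j * e k) * e i₀ = (e i₀ * e j) * (e k * e i₀) := by noncomm_ring
  by_cases hj : j = i₀ <;> by_cases hk : k = i₀
  · subst hj hk
    rw [regroup, if_pos rfl, sub_self, mul_zero, hsq, neg_one_mul, neg_neg, neg_add_cancel]
  · subst hj
    rw [regroup, hsq, hcomm k j hk, if_pos rfl, if_neg hk]
    noncomm_ring
  · subst hk
    rw [regroup, hsq, hcomm j k hj, if_neg hj, if_pos rfl]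
    noncomm_ring
  · rw [regroup, hcomm i₀ j (Ne.symm hj), hcomm k i₀ hk, if_neg hj, if_neg hk,
      show -(e j * e i₀) * -(e i₀ * e k) = e j * (e i₀ * e i₀) * e k by noncomm_ring, hsq]
    noncomm_ring

theorem clifford_bivector_add_conj [DecidableEq ι] [Fintype ι] {K : Type*} [CommRing K]
    [Algebra K A]
    (hsq : ∀ i, e i * e i = -1) (hanti : ∀ i j, i ≠ j → e i * e j + e j * e i = 0)
    (c : ι → ι → K) (i₀ : ι) :
    (∑ j, ∑ k, c j k • (e j * e k)) + e i₀ * (∑ j, ∑ k, c j k • (e j * e k)) * e i₀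
      = 2 * e i₀ * ∑ k, (c i₀ k - c k i₀) • e k := by
  calc (∑ j, ∑ k, c j k • (e j * e k)) + e i₀ * (∑ j, ∑ k, c j k • (e j * e k)) * e i₀
      = ∑ j, ∑ k, c j k • (e j * e k + e i₀ * (e j * e k) * e i₀) := by
        simp only [Finset.mul_sum, Finset.sum_mul, mul_smul_comm, smul_mul_assoc, smul_add,
          Finset.sum_add_distrib]
    _ = 2 * e i₀ * ∑ j, ∑ k, c j k •
          ((if j = i₀ then e k else 0) - (if k = i₀ then e j else 0)) := by
        simp only [clifford_mul_add_conj e hsq hanti, Finset.mul_sum, mul_smul_comm]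
    _ = 2 * e i₀ * ∑ k, (c i₀ k - c k i₀) • e k := by
        simp only [smul_sub, Finset.sum_sub_distrib, smul_ite, smul_zero,
          Finset.sum_ite_eq', Finset.mem_univ, if_true, sub_smul]
        rw [Finset.sum_comm]
        simp

end CliffordRelations

theorem LinearMap.finrank_range_add_comp_comp_le {K M N : Type*} [Field K] [AddCommGroup M]
    [Module K M] [AddCommGroup N] [Module K N] [FiniteDimensional K N]
    (T : M →ₗ[K] N) (U : N →ₗ[K] N) (W : M →ₗ[K] M) :
    Module.finrank K (LinearMap.range (T + U ∘ₗ T ∘ₗ W))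
      ≤ 2 * Module.finrank K (LinearMap.range T) := by
  have hconj : Module.finrank K (LinearMap.range (U ∘ₗ T ∘ₗ W))
      ≤ Module.finrank K (LinearMap.range T) := by
    rw [LinearMap.range_comp]
    exact (Submodule.finrank_map_le _ _).trans
      (Submodule.finrank_mono (LinearMap.range_comp_le_range _ _))
  calc Module.finrank K (LinearMap.range (T + U ∘ₗ T ∘ₗ W))
      ≤ Module.finrank K ↥(LinearMap.range T ⊔ LinearMap.range (U ∘ₗ T ∘ₗ W)) :=
        Submodule.finrank_mono (LinearMap.range_add_le _ _)
    _ ≤ Module.finrank K (LinearMap.range T)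
          + Module.finrank K (LinearMap.range (U ∘ₗ T ∘ₗ W)) :=
        Submodule.finrank_add_le_finrank_add_finrank _ _
    _ ≤ 2 * Module.finrank K (LinearMap.range T) := by omega

section CliffordFamily

variable {V : Type*} [NormedAddCommGroup V] [InnerProductSpace ℝ V] {ι : Type*}

structure IsCliffordFamily (J : ι → V →ₗ[ℝ] V) : Prop where
  inner_map_map : ∀ i, ∀ x y : V, ⟪J i x, J i y⟫ = ⟪x, y⟫
  comp_self : ∀ i, J i ∘ₗ J i = -LinearMap.id
  anticomm : ∀ i j, i ≠ j → J i ∘ₗ J j + J j ∘ₗ J i = 0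

namespace IsCliffordFamily

variable {J : ι → V →ₗ[ℝ] V}

theorem apply_apply (hJ : IsCliffordFamily J) (i : ι) (x : V) : J i (J i x) = -x := by
  simpa using LinearMap.congr_fun (hJ.comp_self i) x

theorem injective (hJ : IsCliffordFamily J) (i : ι) : Function.Injective (J i) :=
  Function.LeftInverse.injective (g := fun x => -J i x) fun x => by
    simp only [hJ.apply_apply, neg_neg]

theorem inner_apply_eq_zero (hJ : IsCliffordFamily J) {i j : ι} (hij : i ≠ j) (x : V) :
    ⟪J i x, J j x⟫ = 0 := by
  have h₁ : ⟪J i x, J j x⟫ = -⟪x, J i (J j x)⟫ := by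
    rw [← hJ.inner_map_map i, hJ.apply_apply, inner_neg_left]
  have h₂ : ⟪J i x, J j x⟫ = -⟪x, J j (J i x)⟫ := by
    rw [real_inner_comm, ← hJ.inner_map_map j, hJ.apply_apply, inner_neg_left]
  have h₃ : ⟪x, J i (J j x)⟫ + ⟪x, J j (J i x)⟫ = 0 := by
    simpa [inner_add_right] using
      congrArg (⟪x, ·⟫) (LinearMap.congr_fun (hJ.anticomm i j hij) x)
  linarith

theorem inner_sum_smul_apply_self [Fintype ι] (hJ : IsCliffordFamily J) (b : ι → ℝ) (x : V) :
    ⟪(∑ k, b k • J k) x, (∑ k, b k • J k) x⟫ = (∑ k, b k ^ 2) * ⟪x, x⟫ := by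
  classical
  simp only [LinearMap.sum_apply, LinearMap.smul_apply, sum_inner,
    inner_sum, real_inner_smul_left, real_inner_smul_right, Finset.sum_mul]
  refine Finset.sum_congr rfl fun j _ => ?_
  rw [Finset.sum_eq_single j (fun k _ hkj => by
    rw [hJ.inner_apply_eq_zero hkj, mul_zero, mul_zero]) (by simp), hJ.inner_map_map]
  ring

theorem injective_sum_smul [Fintype ι] (hJ : IsCliffordFamily J) {b : ι → ℝ} (hb : b ≠ 0) :
    Function.Injective ⇑(∑ k, b k • J k) := by
  have hpos : 0 < ∑ k, b k ^ 2 := by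
    obtain ⟨k, hk⟩ := Function.ne_iff.mp hb
    exact (pow_pos (abs_pos.mpr hk) 2).trans_le <| by
      simpa using Finset.single_le_sum (fun i _ => sq_nonneg (b i)) (Finset.mem_univ k)
  refine (injective_iff_map_eq_zero (∑ k, b k • J k)).mpr fun x hx => ?_
  have := hJ.inner_sum_smul_apply_self b x
  rw [hx, inner_zero_left, eq_comm, mul_eq_zero] at this
  exact inner_self_eq_zero.mp (this.resolve_left hpos.ne')

end IsCliffordFamily

end CliffordFamily

/-- A nonzero combination `S = Σ_{j<k} a_{jk} J_jJ_k` of products from a Clifford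
family has rank at least `n/2`, i.e. `n ≤ 2 rank S`. -/
theorem stmt_10 {V : Type*} [NormedAddCommGroup V] [InnerProductSpace ℝ V]
    [FiniteDimensional ℝ V]
    {κ : ℕ} (J : Fin κ → (V →ₗ[ℝ] V))
    (hiso : ∀ i, ∀ x y : V, ⟪J i x, J i y⟫ = ⟪x, y⟫)
    (hsq : ∀ i, J i ∘ₗ J i = -LinearMap.id)
    (hanti : ∀ i j, i ≠ j → J i ∘ₗ J j + J j ∘ₗ J i = 0)
    (a : Fin κ → Fin κ → ℝ) (hne : ∃ j k, j < k ∧ a j k ≠ 0) :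
    Module.finrank ℝ V ≤ 2 * Module.finrank ℝ
      (LinearMap.range (∑ j, ∑ k, if j < k then a j k • (J j ∘ₗ J k) else 0)) := by
  have hJ : IsCliffordFamily J := ⟨hiso, hsq, hanti⟩
  obtain ⟨j₀, k₀, hlt, ha⟩ := hne
  set c : Fin κ → Fin κ → ℝ := fun j k => if j < k then a j k else 0
  set S : Module.End ℝ V := ∑ j, ∑ k, c j k • (J j * J k)
  have hS : (∑ j, ∑ k, if j < k then a j k • (J j ∘ₗ J k) else 0) = S := by
    simp only [S, c, ite_smul, zero_smul]
    rfl
  set L : Module.End ℝ V := ∑ k, (c j₀ k - c k j₀) • J k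
  have hL : Function.Injective L := hJ.injective_sum_smul fun h => ha <| by
    simpa [c, hlt, not_lt_of_gt hlt] using congrFun h k₀
  have hkey : S + J j₀ ∘ₗ S ∘ₗ J j₀ = 2 * J j₀ * L :=
    clifford_bivector_add_conj J hsq hanti c j₀
  have hinj : Function.Injective ⇑(S + J j₀ ∘ₗ S ∘ₗ J j₀) := by
    intro x y h
    simp only [hkey, Module.End.mul_apply, Module.End.ofNat_apply,
      ← ofNat_smul_eq_nsmul ℝ] at h
    exact hL (hJ.injective j₀ (smul_right_injective V two_ne_zero h))
  rw [hS, ← LinearMap.finrank_range_of_inj hinj]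
  exact LinearMap.finrank_range_add_comp_comp_le S (J j₀) (J j₀)
end

section
/- Let (V,⟨·,·⟩) be a real inner product space, J an Hermitian almost complex structure, c₀, c₁ real constants, and R := c₀R₀ + c₁R_J. Then for any unit vector x, the complex Jacobi operator 𝒥_R(π_x) := 𝒥_R(x) + 𝒥_R(Jx) satisfies: 𝒥_R(π_x)y = (c₀ + 3c₁)y for y ∈ Span{x, Jx}, and 𝒥_R(π_x)y = 2c₀y for y ⟂ Span{x, Jx}. In particular J commutes with 𝒥_R(π_x) and the eigenvalues are independent of x. -/
open RealInnerProductSpace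

/-!
Since `J` is an isometry with `J² = -1`, it is skew-adjoint, so `{x, Jx}` is orthonormal for a
unit vector `x`. Expanding the definition of `R` then gives
`R(y,x,x,z) + R(y,Jx,Jx,z) = 2c₀⟪y,z⟫ + (3c₁ - c₀)(⟪y,x⟫⟪x,z⟫ + ⟪y,Jx⟫⟪Jx,z⟫)`,
i.e. `𝒥_R(π_x) = 2c₀ + (3c₁ - c₀)·P`, where `P` is the orthogonal projection onto `Span{x, Jx}`.
Both eigenvalue statements are read off from this, and `J` commutes with `𝒥_R(π_x)` because
it commutes with `P`.
-/

section

variable {V : Type*} [NormedAddCommGroup V] [InnerProductSpace ℝ V]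

lemma inner_mul_inner_add_inner_mul_inner_of_mem_span_pair {u v y : V} (hu : ⟪u, u⟫ = 1)
    (hv : ⟪v, v⟫ = 1) (huv : ⟪u, v⟫ = 0) (hy : y ∈ Submodule.span ℝ ({u, v} : Set V)) (z : V) :
    ⟪y, u⟫ * ⟪u, z⟫ + ⟪y, v⟫ * ⟪v, z⟫ = ⟪y, z⟫ := by
  obtain ⟨a, b, rfl⟩ := Submodule.mem_span_pair.mp hy
  simp only [inner_add_left, real_inner_smul_left, hu, hv, huv, real_inner_comm u v]
  ring

variable {J : V →ₗ[ℝ] V}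

lemma apply_apply_eq_neg_of_comp_eq_neg_id (hJ2 : J ∘ₗ J = -LinearMap.id) (a : V) :
    J (J a) = -a := by
  simpa using LinearMap.congr_fun hJ2 a

lemma inner_apply_left_eq_neg_of_comp_eq_neg_id (hJiso : ∀ a b : V, ⟪J a, J b⟫ = ⟪a, b⟫)
    (hJ2 : J ∘ₗ J = -LinearMap.id) (a b : V) : ⟪J a, b⟫ = -⟪a, J b⟫ := by
  have h := hJiso a (J b)
  rw [apply_apply_eq_neg_of_comp_eq_neg_id hJ2, inner_neg_right] at h
  linarith

lemma inner_apply_self_eq_zero_of_skew (hskew : ∀ a b : V, ⟪J a, b⟫ = -⟪a, J b⟫) (a : V) :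
    ⟪J a, a⟫ = 0 := by
  linarith [hskew a a, real_inner_comm a (J a)]

lemma complexJacobi_eq_of_almostComplex (hJiso : ∀ a b : V, ⟪J a, J b⟫ = ⟪a, b⟫)
    (hJ2 : J ∘ₗ J = -LinearMap.id) {c₀ c₁ : ℝ} {R : V → V → V → V → ℝ}
    (hR : ∀ x y z t : V, R x y z t =
      c₀ * (⟪x, t⟫ * ⟪y, z⟫ - ⟪x, z⟫ * ⟪y, t⟫) +
      c₁ * (⟪x, J t⟫ * ⟪y, J z⟫ - ⟪x, J z⟫ * ⟪y, J t⟫ - 2 * ⟪x, J y⟫ * ⟪z, J t⟫))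
    {x : V} (hx : ⟪x, x⟫ = 1) (y z : V) :
    R y x x z + R y (J x) (J x) z =
      2 * c₀ * ⟪y, z⟫ + (3 * c₁ - c₀) * (⟪y, x⟫ * ⟪x, z⟫ + ⟪y, J x⟫ * ⟪J x, z⟫) := by
  have hskew := inner_apply_left_eq_neg_of_comp_eq_neg_id hJiso hJ2
  have hJxx := inner_apply_self_eq_zero_of_skew hskew x
  have hxJx : ⟪x, J x⟫ = 0 := by rw [real_inner_comm, hJxx]
  have hxJz : ⟪x, J z⟫ = -⟪J x, z⟫ := by rw [hskew, neg_neg]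
  simp only [hR, apply_apply_eq_neg_of_comp_eq_neg_id hJ2, inner_neg_right, hJiso,
    hxJz, hxJx, hJxx, hx]
  ring

end

/-- For `R = c₀R₀ + c₁R_J` with `J` an Hermitian almost complex structure, the
complex Jacobi operator `𝒥_R(π_x) = 𝒥_R(x) + 𝒥_R(Jx)` (characterized by
`⟪𝒥_R(π_x)y, z⟫ = R(y,x,x,z) + R(y,Jx,Jx,z)`) acts as `(c₀+3c₁)·id` on
`Span{x,Jx}` and as `2c₀·id` on its orthogonal complement; moreover it commutes
with `J`. -/
theorem stmt_15 {V : Type*} [NormedAddCommGroup V] [InnerProductSpace ℝ V]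
    (J : V →ₗ[ℝ] V)
    (hJiso : ∀ x y : V, ⟪J x, J y⟫ = ⟪x, y⟫) (hJ2 : J ∘ₗ J = -LinearMap.id)
    (c₀ c₁ : ℝ) (R : V → V → V → V → ℝ)
    (hR : ∀ x y z t : V, R x y z t =
      c₀ * (⟪x, t⟫ * ⟪y, z⟫ - ⟪x, z⟫ * ⟪y, t⟫) +
      c₁ * (⟪x, J t⟫ * ⟪y, J z⟫ - ⟪x, J z⟫ * ⟪y, J t⟫ - 2 * ⟪x, J y⟫ * ⟪z, J t⟫))
    (x : V) (hx : ‖x‖ = 1) :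
    (∀ y ∈ Submodule.span ℝ ({x, J x} : Set V), ∀ z : V,
      R y x x z + R y (J x) (J x) z = ⟪((c₀ + 3 * c₁) • y : V), z⟫) ∧
    (∀ y : V, ⟪y, x⟫ = 0 → ⟪y, J x⟫ = 0 → ∀ z : V,
      R y x x z + R y (J x) (J x) z = ⟪((2 * c₀) • y : V), z⟫) ∧
    (∀ y z : V, R (J y) x x z + R (J y) (J x) (J x) z
      = -(R y x x (J z) + R y (J x) (J x) (J z))) := by
  have hskew := inner_apply_left_eq_neg_of_comp_eq_neg_id hJiso hJ2
  have hxx : ⟪x, x⟫ = 1 := by rw [real_inner_self_eq_norm_sq, hx, one_pow]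
  have hJxJx : ⟪J x, J x⟫ = 1 := by rw [hJiso, hxx]
  have hxJx : ⟪x, J x⟫ = 0 := by rw [real_inner_comm, inner_apply_self_eq_zero_of_skew hskew]
  have key := complexJacobi_eq_of_almostComplex hJiso hJ2 hR hxx
  refine ⟨fun y hy z => ?_, fun y hyx hyJx z => ?_, fun y z => ?_⟩
  · rw [key, real_inner_smul_left,
      inner_mul_inner_add_inner_mul_inner_of_mem_span_pair hxx hJxJx hxJx hy]
    ring
  · rw [key, hyx, hyJx, real_inner_smul_left]
    ring
  · have hxJz : ⟪x, J z⟫ = -⟪J x, z⟫ := by rw [hskew, neg_neg]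
    rw [key, key, hskew y z, hskew y x, hJiso, hJiso, hxJz]
    ring
end

section
/- Let (V,⟨·,·⟩,R) be a model with R an algebraic curvature tensor, dim V = n, and 2 ≤ p ≤ n-1. For a p-dimensional subspace σ with orthonormal basis {e₁,…,e_p}, set 𝒥_R(σ) := Σᵢ 𝒥_R(eᵢ). If 𝒥_R(σ) = 0 for every p-dimensional subspace σ of V, then R = 0. -/
/-!
Fix `y, z` and put `F x = R(y, x, x, z)`. Two unit vectors `u, v` can be completed by one common
orthonormal `(p - 1)`-frame of `{u, v}ᗮ` (as `p - 1 ≤ n - 2`), so `F u = F v`; summing `F` over a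
single orthonormal `p`-frame then gives `p • F u = 0`. Hence `(x, w) ↦ R(y, x, w, z)` is alternating,
i.e. `R` is antisymmetric in its middle two slots. Together with the antisymmetry in the first two,
`R` is alternating in its first three slots, and the Bianchi identity reads `3 R = 0`.
-/

open RealInnerProductSpace Module

section Frames

variable {V : Type*} [NormedAddCommGroup V] [InnerProductSpace ℝ V]

theorem Orthonormal.fin_cons {k : ℕ} {f : Fin k → V} (hf : Orthonormal ℝ f) {w : V}
    (hw : ‖w‖ = 1) (hwf : ∀ i, ⟪w, f i⟫ = 0) : Orthonormal ℝ (Fin.cons w f : Fin (k + 1) → V) := by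
  rw [orthonormal_iff_ite] at hf ⊢
  intro i j
  cases i using Fin.cases <;> cases j using Fin.cases <;>
    simp [hw, hwf, hf, real_inner_comm w, Fin.succ_ne_zero, (Fin.succ_ne_zero _).symm]

theorem Submodule.exists_orthonormal_fin (W : Submodule ℝ V) [FiniteDimensional ℝ W] {k : ℕ}
    (hk : k ≤ finrank ℝ W) : ∃ f : Fin k → V, Orthonormal ℝ f ∧ ∀ i, f i ∈ W :=
  ⟨fun i => stdOrthonormalBasis ℝ W (Fin.castLE hk i),
    ((stdOrthonormalBasis ℝ W).orthonormal.comp _ (Fin.castLE_injective hk)).comp_linearIsometry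
      W.subtypeₗᵢ,
    fun i => (stdOrthonormalBasis ℝ W (Fin.castLE hk i)).2⟩

variable [FiniteDimensional ℝ V]

theorem eq_of_forall_sum_orthonormal_eq_zero {M : Type*} [AddCommGroup M] (F : V → M) {k : ℕ}
    (hk : k + 2 ≤ finrank ℝ V)
    (hF : ∀ e : Fin (k + 1) → V, Orthonormal ℝ e → ∑ i, F (e i) = 0)
    {u v : V} (hu : ‖u‖ = 1) (hv : ‖v‖ = 1) : F u = F v := by
  classical
  have hspan : finrank ℝ (Submodule.span ℝ ({u, v} : Set V)) ≤ 2 := by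
    have h := finrank_span_finset_le_card (R := ℝ) ({u, v} : Finset V)
    rw [Finset.coe_pair] at h
    exact h.trans Finset.card_le_two
  have hW : k ≤ finrank ℝ (Submodule.span ℝ ({u, v} : Set V))ᗮ := by
    have := (Submodule.span ℝ ({u, v} : Set V)).finrank_add_finrank_orthogonal
    omega
  obtain ⟨f, hf, hfW⟩ := Submodule.exists_orthonormal_fin _ hW
  have hcons : ∀ w ∈ ({u, v} : Set V), ‖w‖ = 1 → F w + ∑ i, F (f i) = 0 := fun w hw hw1 => by
    have hwf i : ⟪w, f i⟫ = 0 := (Submodule.mem_orthogonal _ _).mp (hfW i) w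
      (Submodule.subset_span hw)
    simpa [Fin.sum_univ_succ] using hF _ (hf.fin_cons hw1 hwf)
  exact add_right_cancel ((hcons u (by simp) hu).trans (hcons v (by simp) hv).symm)

theorem eq_zero_of_forall_sum_orthonormal_eq_zero {M : Type*} [AddCommGroup M]
    [IsAddTorsionFree M] (F : V → M) {k : ℕ} (hk : k + 2 ≤ finrank ℝ V)
    (hF : ∀ e : Fin (k + 1) → V, Orthonormal ℝ e → ∑ i, F (e i) = 0)
    {u : V} (hu : ‖u‖ = 1) : F u = 0 := by
  obtain ⟨e, he, -⟩ :=
    (⊤ : Submodule ℝ V).exists_orthonormal_fin (k := k + 1) (by rw [finrank_top]; omega)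
  have hsum := hF e he
  simp only [eq_of_forall_sum_orthonormal_eq_zero F hk hF (he.1 _) hu, Finset.sum_const,
    Finset.card_univ, Fintype.card_fin] at hsum
  exact (nsmul_eq_zero_iff_right k.succ_ne_zero).mp hsum

theorem LinearMap.isAlt_of_forall_sum_orthonormal {M : Type*} [AddCommGroup M] [Module ℝ M]
    [IsAddTorsionFree M] (B : V →ₗ[ℝ] V →ₗ[ℝ] M) {k : ℕ} (hk : k + 2 ≤ finrank ℝ V)
    (hB : ∀ e : Fin (k + 1) → V, Orthonormal ℝ e → ∑ i, B (e i) (e i) = 0) : B.IsAlt := by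
  intro x
  rcases eq_or_ne x 0 with rfl | hx
  · simp
  set u := ‖x‖⁻¹ • x
  have hu : B u u = 0 :=
    eq_zero_of_forall_sum_orthonormal_eq_zero (fun x => B x x) hk hB (norm_smul_inv_norm hx)
  calc B x x = B (‖x‖ • u) (‖x‖ • u) := by rw [smul_inv_smul₀ (norm_ne_zero_iff.mpr hx)]
    _ = ‖x‖ • ‖x‖ • B u u := by simp only [map_smul, LinearMap.smul_apply]
    _ = 0 := by rw [hu, smul_zero, smul_zero]

end Frames

theorem eq_zero_of_antisymm_of_bianchi {V : Type*} [AddCommGroup V] [Module ℝ V]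
    (R : V →ₗ[ℝ] V →ₗ[ℝ] V →ₗ[ℝ] V →ₗ[ℝ] ℝ)
    (h12 : ∀ x y z t : V, R x y z t = -R y x z t)
    (h23 : ∀ x y z t : V, R x y z t = -R x z y t)
    (hbianchi : ∀ x y z t : V, R x y z t + R y z x t + R z x y t = 0) : R = 0 := by
  ext x y z t
  have hyzx : R y z x t = R x y z t := by rw [h23, h12, neg_neg]
  have hzxy : R z x y t = R x y z t := by rw [h12, h23, neg_neg]
  have h := hbianchi x y z t
  rw [hyzx, hzxy] at h
  simp only [LinearMap.zero_apply]
  linarith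

theorem stmt_17_general {V : Type*} [NormedAddCommGroup V] [InnerProductSpace ℝ V]
    [FiniteDimensional ℝ V]
    (R : V →ₗ[ℝ] V →ₗ[ℝ] V →ₗ[ℝ] V →ₗ[ℝ] ℝ)
    (hanti : ∀ x y z t : V, R x y z t = - R y x z t)
    (hbianchi : ∀ x y z t : V, R x y z t + R y z x t + R z x y t = 0)
    (p : ℕ) (hp2 : 2 ≤ p) (hpn : p ≤ Module.finrank ℝ V - 1)
    (hvanish : ∀ e : Fin p → V, Orthonormal ℝ e →
      ∀ y z : V, ∑ i, R y (e i) (e i) z = 0) :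
    R = 0 := by
  obtain ⟨k, rfl⟩ : ∃ k, p = k + 1 := ⟨p - 1, by omega⟩
  have hk : k + 2 ≤ finrank ℝ V := by omega
  have halt : ∀ y z : V, ((R y).compr₂ (LinearMap.applyₗ z)).IsAlt := fun y z =>
    LinearMap.isAlt_of_forall_sum_orthonormal _ hk fun e he => hvanish e he y z
  refine eq_zero_of_antisymm_of_bianchi R hanti (fun x y z t => ?_) hbianchi
  simpa using ((halt x t).neg z y).symm

/-- If the higher order Jacobi operator `𝒥_R(σ) = Σᵢ 𝒥_R(eᵢ)` of an algebraic
curvature tensor vanishes on every `p`-dimensional subspace `σ` (with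
`2 ≤ p ≤ n-1`), then `R = 0`.  The vanishing is expressed through orthonormal
bases: `Σᵢ R(y, eᵢ, eᵢ, z) = 0` for every orthonormal family `e : Fin p → V`. -/
theorem stmt_17 {V : Type*} [NormedAddCommGroup V] [InnerProductSpace ℝ V]
    [FiniteDimensional ℝ V]
    (R : V →ₗ[ℝ] V →ₗ[ℝ] V →ₗ[ℝ] V →ₗ[ℝ] ℝ)
    (hanti : ∀ x y z t : V, R x y z t = - R y x z t)
    (hpair : ∀ x y z t : V, R x y z t = R z t x y)
    (hbianchi : ∀ x y z t : V, R x y z t + R y z x t + R z x y t = 0)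
    (p : ℕ) (hp2 : 2 ≤ p) (hpn : p ≤ Module.finrank ℝ V - 1)
    (hvanish : ∀ e : Fin p → V, Orthonormal ℝ e →
      ∀ y z : V, ∑ i, R y (e i) (e i) z = 0) :
    R = 0 :=
  stmt_17_general R hanti hbianchi p hp2 hpn hvanish
end

section
/- Let {K₁,K₂,K₃} be a quaternion structure on a real inner product space V with dim V ≥ 8 divisible by 4, and let V = V₊ ⊕ V₋ be a nontrivial orthogonal decomposition into quaternion-invariant subspaces. Define J₁ := K₁, J₂ := K₂, and J₃ := ∓K₁K₂ on V±. Set R := R_{J₂} - R_{J₁J₂} - R_{J₃} + R_{J₁J₃}. Then the complex Jacobi operator with respect to J = J₁ vanishes identically: for every unit vector x, 𝒥_R(x) + 𝒥_R(J₁x) = 0, yet R ≠ 0. -/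
/-!
Split `R = (R_{K₂} - R_{K₁K₂}) - (R_{J₃} - R_{K₁J₃})`. Both `K₂` and `J₃ = K₂ K₁ σ`, with `σ` the
reflection in `V₊` (which commutes with `K₁` and `K₂`), are skew-adjoint and anticommute with
`K₁`. For such `Ψ` the Jacobi operator of `R_Ψ` is `3 ⟨·, Ψ x⟩ Ψ x`, and the complex Jacobi
operator of `R_Ψ - R_{K₁Ψ}` vanishes. For `0 ≠ e ∈ V₊` one finds `R(e, K₂e, K₂e, e) = 6 |e|⁴`.
-/

open RealInnerProductSpace

section

variable {V : Type*} [NormedAddCommGroup V] [InnerProductSpace ℝ V]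

theorem isSkewAdjoint_innerₗ_iff {Ψ : V →ₗ[ℝ] V} :
    (innerₗ V).IsSkewAdjoint Ψ ↔ ∀ x y, ⟪Ψ x, y⟫ = -⟪x, Ψ y⟫ := by
  simp [LinearMap.IsSkewAdjoint, LinearMap.IsAdjointPair, inner_neg_right]

namespace LinearMap.IsSkewAdjoint

variable {K Ψ : V →ₗ[ℝ] V}

theorem inner_apply_left (hΨ : (innerₗ V).IsSkewAdjoint Ψ) (x y : V) :
    ⟪Ψ x, y⟫ = -⟪x, Ψ y⟫ :=
  isSkewAdjoint_innerₗ_iff.1 hΨ x y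

theorem inner_self_apply (hΨ : (innerₗ V).IsSkewAdjoint Ψ) (x : V) : ⟪x, Ψ x⟫ = 0 := by
  have h := hΨ.inner_apply_left x x
  rw [real_inner_comm] at h
  linarith

theorem of_isometry_of_comp_self (hiso : ∀ x y, ⟪K x, K y⟫ = ⟪x, y⟫)
    (hsq : K ∘ₗ K = -LinearMap.id) : (innerₗ V).IsSkewAdjoint K := by
  refine isSkewAdjoint_innerₗ_iff.2 fun x y => ?_
  have hKK : K (K y) = -y := by simpa using LinearMap.congr_fun hsq y
  rw [← hiso x (K y), hKK, inner_neg_right, neg_neg]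

theorem comp_of_anticommute (hK : (innerₗ V).IsSkewAdjoint K)
    (hΨ : (innerₗ V).IsSkewAdjoint Ψ) (hanti : K ∘ₗ Ψ + Ψ ∘ₗ K = 0) :
    (innerₗ V).IsSkewAdjoint (K ∘ₗ Ψ) := by
  refine isSkewAdjoint_innerₗ_iff.2 fun x y => ?_
  have hΨK : Ψ (K y) = -K (Ψ y) := by
    simpa [eq_neg_iff_add_eq_zero, add_comm] using LinearMap.congr_fun hanti y
  rw [comp_apply, comp_apply, hK.inner_apply_left, hΨ.inner_apply_left, hΨK, inner_neg_right,
    neg_neg]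

theorem comp_of_commute (hΨ : (innerₗ V).IsSkewAdjoint Ψ) (hK : K.IsSymmetric)
    (hcomm : Ψ ∘ₗ K = K ∘ₗ Ψ) : (innerₗ V).IsSkewAdjoint (Ψ ∘ₗ K) := by
  refine isSkewAdjoint_innerₗ_iff.2 fun x y => ?_
  rw [comp_apply, hΨ.inner_apply_left, hK, ← comp_apply K Ψ, ← hcomm]

end LinearMap.IsSkewAdjoint

def curvatureTensor (Ψ : V →ₗ[ℝ] V) (x y z t : V) : ℝ :=
  ⟪x, Ψ t⟫ * ⟪y, Ψ z⟫ - ⟪x, Ψ z⟫ * ⟪y, Ψ t⟫ - 2 * ⟪x, Ψ y⟫ * ⟪z, Ψ t⟫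

theorem curvatureTensor_jacobi {Ψ : V →ₗ[ℝ] V} (hΨ : (innerₗ V).IsSkewAdjoint Ψ) (x y z : V) :
    curvatureTensor Ψ y x x z = 3 * ⟪y, Ψ x⟫ * ⟪Ψ x, z⟫ := by
  rw [curvatureTensor, hΨ.inner_self_apply, hΨ.inner_apply_left x z]
  ring

/-- `Ψ (K x) = -K Ψ x` and `K Ψ (K x) = Ψ x`, so replacing `x` by `K x` swaps the Jacobi
operators of `R_Ψ` and `R_{KΨ}`. -/
theorem curvatureTensor_sub_comp_complexJacobi_eq_zero {K Ψ : V →ₗ[ℝ] V}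
    (hK : (innerₗ V).IsSkewAdjoint K) (hKK : K ∘ₗ K = -LinearMap.id)
    (hΨ : (innerₗ V).IsSkewAdjoint Ψ) (hanti : K ∘ₗ Ψ + Ψ ∘ₗ K = 0) (x y z : V) :
    (curvatureTensor Ψ y x x z - curvatureTensor (K ∘ₗ Ψ) y x x z) +
      (curvatureTensor Ψ y (K x) (K x) z - curvatureTensor (K ∘ₗ Ψ) y (K x) (K x) z) = 0 := by
  have hKΨ := hK.comp_of_anticommute hΨ hanti
  have hΨK : Ψ (K x) = -K (Ψ x) := by
    simpa [eq_neg_iff_add_eq_zero, add_comm] using LinearMap.congr_fun hanti x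
  have hKKΨ : K (K (Ψ x)) = -Ψ x := by simpa using LinearMap.congr_fun hKK (Ψ x)
  simp only [curvatureTensor_jacobi hΨ, curvatureTensor_jacobi hKΨ, LinearMap.comp_apply, hΨK,
    map_neg, hKKΨ, inner_neg_left, inner_neg_right]
  ring

namespace Submodule

variable {U : Submodule ℝ V} [U.HasOrthogonalProjection]

theorem isSymmetric_reflection : U.reflection.toLinearMap.IsSymmetric := fun x y => by
  change ⟪U.reflection x, y⟫ = ⟪x, U.reflection y⟫
  rw [← U.reflection.inner_map_map x (U.reflection y), reflection_reflection]

theorem eq_comp_reflection_of_eqOn {A J : V →ₗ[ℝ] V} (hU : ∀ x ∈ U, J x = A x)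
    (hUperp : ∀ x ∈ Uᗮ, J x = -A x) : J = A ∘ₗ U.reflection.toLinearMap := by
  ext x
  obtain ⟨p, hp, m, hm, rfl⟩ := U.exists_add_mem_mem_orthogonal x
  simp [hU p hp, hUperp m hm, reflection_mem_subspace_eq_self hp,
    reflection_mem_subspace_orthogonalComplement_eq_neg hm]

theorem comp_reflection_eq_reflection_comp {A : V →ₗ[ℝ] V} (hU : ∀ x ∈ U, A x ∈ U)
    (hUperp : ∀ x ∈ Uᗮ, A x ∈ Uᗮ) :
    A ∘ₗ U.reflection.toLinearMap = U.reflection.toLinearMap ∘ₗ A := by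
  ext x
  obtain ⟨p, hp, m, hm, rfl⟩ := U.exists_add_mem_mem_orthogonal x
  simp [reflection_mem_subspace_eq_self, reflection_mem_subspace_orthogonalComplement_eq_neg,
    hp, hm, hU p hp, hUperp m hm]

end Submodule

section QuaternionPair

variable {K₁ K₂ : V →ₗ[ℝ] V}

open LinearMap

theorem isSkewAdjoint_comp_comp_reflection (hK₁ : (innerₗ V).IsSkewAdjoint K₁)
    (hK₂ : (innerₗ V).IsSkewAdjoint K₂) (hanti : K₁ ∘ₗ K₂ + K₂ ∘ₗ K₁ = 0)
    {U : Submodule ℝ V} [U.HasOrthogonalProjection]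
    (h₁ : ∀ x ∈ U, K₁ x ∈ U) (h₁' : ∀ x ∈ Uᗮ, K₁ x ∈ Uᗮ)
    (h₂ : ∀ x ∈ U, K₂ x ∈ U) (h₂' : ∀ x ∈ Uᗮ, K₂ x ∈ Uᗮ) :
    (innerₗ V).IsSkewAdjoint ((K₂ ∘ₗ K₁) ∘ₗ U.reflection.toLinearMap) := by
  refine (hK₂.comp_of_anticommute hK₁ (by rwa [add_comm])).comp_of_commute
    Submodule.isSymmetric_reflection ?_
  rw [comp_assoc, Submodule.comp_reflection_eq_reflection_comp h₁ h₁', ← comp_assoc,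
    Submodule.comp_reflection_eq_reflection_comp h₂ h₂', comp_assoc]

theorem anticommute_comp_comp_reflection (hanti : K₁ ∘ₗ K₂ + K₂ ∘ₗ K₁ = 0)
    {U : Submodule ℝ V} [U.HasOrthogonalProjection]
    (h₁ : ∀ x ∈ U, K₁ x ∈ U) (h₁' : ∀ x ∈ Uᗮ, K₁ x ∈ Uᗮ) :
    K₁ ∘ₗ ((K₂ ∘ₗ K₁) ∘ₗ U.reflection.toLinearMap) +
      ((K₂ ∘ₗ K₁) ∘ₗ U.reflection.toLinearMap) ∘ₗ K₁ = 0 := by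
  ext x
  have hσ : U.reflection (K₁ x) = K₁ (U.reflection x) :=
    (LinearMap.congr_fun (Submodule.comp_reflection_eq_reflection_comp h₁ h₁') x).symm
  simpa [hσ] using LinearMap.congr_fun hanti (K₁ (U.reflection x))

theorem curvatureTensor_sub_sub_add_apply (hK₁ : (innerₗ V).IsSkewAdjoint K₁)
    (hK₂ : (innerₗ V).IsSkewAdjoint K₂) (hanti : K₁ ∘ₗ K₂ + K₂ ∘ₗ K₁ = 0)
    {J : V →ₗ[ℝ] V} (hJ : (innerₗ V).IsSkewAdjoint J) (hantiJ : K₁ ∘ₗ J + J ∘ₗ K₁ = 0)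
    {e : V} (hK₁e : K₁ (K₁ e) = -e) (hK₂e : K₂ (K₂ e) = -e) (hJe : J (K₂ e) = K₁ e) :
    curvatureTensor K₂ e (K₂ e) (K₂ e) e - curvatureTensor (K₁ ∘ₗ K₂) e (K₂ e) (K₂ e) e -
      curvatureTensor J e (K₂ e) (K₂ e) e + curvatureTensor (K₁ ∘ₗ J) e (K₂ e) (K₂ e) e =
      6 * ⟪e, e⟫ ^ 2 := by
  rw [curvatureTensor_jacobi hK₂, curvatureTensor_jacobi hJ,
    curvatureTensor_jacobi (hK₁.comp_of_anticommute hK₂ hanti),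
    curvatureTensor_jacobi (hK₁.comp_of_anticommute hJ hantiJ)]
  simp only [comp_apply, hK₂e, hJe, hK₁e, map_neg, inner_neg_left, inner_neg_right,
    hK₁.inner_self_apply, real_inner_comm e (K₁ e)]
  ring

end QuaternionPair

end

theorem stmt_18_general {V : Type*} [NormedAddCommGroup V] [InnerProductSpace ℝ V]
    [FiniteDimensional ℝ V]
    (K₁ K₂ : V →ₗ[ℝ] V)
    (hiso₁ : ∀ x y : V, ⟪K₁ x, K₁ y⟫ = ⟪x, y⟫)
    (hiso₂ : ∀ x y : V, ⟪K₂ x, K₂ y⟫ = ⟪x, y⟫)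
    (hsq₁ : K₁ ∘ₗ K₁ = -LinearMap.id) (hsq₂ : K₂ ∘ₗ K₂ = -LinearMap.id)
    (hanti₁₂ : K₁ ∘ₗ K₂ + K₂ ∘ₗ K₁ = 0)
    -- the nontrivial orthogonal decomposition `V = V₊ ⊕ V₋` into
    -- quaternion-invariant subspaces
    (Vp : Submodule ℝ V) (hbot : Vp ≠ ⊥)
    (hinv₁ : ∀ x ∈ Vp, K₁ x ∈ Vp) (hinv₂ : ∀ x ∈ Vp, K₂ x ∈ Vp)
    (hinv₁' : ∀ x ∈ Vpᗮ, K₁ x ∈ Vpᗮ) (hinv₂' : ∀ x ∈ Vpᗮ, K₂ x ∈ Vpᗮ)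
    -- `J₃ = ∓ K₁K₂` on `V±`
    (J₃ : V →ₗ[ℝ] V)
    (hJ₃p : ∀ x ∈ Vp, J₃ x = -(K₁ (K₂ x)))
    (hJ₃m : ∀ x ∈ Vpᗮ, J₃ x = K₁ (K₂ x))
    (RΨ : (V →ₗ[ℝ] V) → V → V → V → V → ℝ)
    (hRΨ : ∀ (Ψ : V →ₗ[ℝ] V) (x y z t : V), RΨ Ψ x y z t =
      ⟪x, Ψ t⟫ * ⟪y, Ψ z⟫ - ⟪x, Ψ z⟫ * ⟪y, Ψ t⟫ - 2 * ⟪x, Ψ y⟫ * ⟪z, Ψ t⟫)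
    (R : V → V → V → V → ℝ)
    (hR : ∀ x y z t : V, R x y z t =
      RΨ K₂ x y z t - RΨ (K₁ ∘ₗ K₂) x y z t - RΨ J₃ x y z t + RΨ (K₁ ∘ₗ J₃) x y z t) :
    (∀ x : V, ‖x‖ = 1 → ∀ y z : V, R y x x z + R y (K₁ x) (K₁ x) z = 0) ∧ R ≠ 0 := by
  have hRΨ' : RΨ = curvatureTensor := by funext Ψ x y z t; exact hRΨ Ψ x y z t
  have hK₁ := LinearMap.IsSkewAdjoint.of_isometry_of_comp_self hiso₁ hsq₁
  have hK₂ := LinearMap.IsSkewAdjoint.of_isometry_of_comp_self hiso₂ hsq₂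
  have hK₂K₁ (v : V) : K₂ (K₁ v) = -K₁ (K₂ v) := by
    simpa [eq_neg_iff_add_eq_zero, add_comm] using LinearMap.congr_fun hanti₁₂ v
  have hJ₃ : J₃ = (K₂ ∘ₗ K₁) ∘ₗ Vp.reflection.toLinearMap :=
    Submodule.eq_comp_reflection_of_eqOn (fun x hx => by simp [hJ₃p x hx, hK₂K₁])
      (fun x hx => by simp [hJ₃m x hx, hK₂K₁])
  have hJ₃skew : (innerₗ V).IsSkewAdjoint J₃ :=
    hJ₃ ▸ isSkewAdjoint_comp_comp_reflection hK₁ hK₂ hanti₁₂ hinv₁ hinv₁' hinv₂ hinv₂'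
  have hantiJ₃ : K₁ ∘ₗ J₃ + J₃ ∘ₗ K₁ = 0 :=
    hJ₃ ▸ anticommute_comp_comp_reflection hanti₁₂ hinv₁ hinv₁'
  refine ⟨fun x _ y z => ?_, fun hR0 => ?_⟩
  · simp only [hR, hRΨ']
    linarith [curvatureTensor_sub_comp_complexJacobi_eq_zero hK₁ hsq₁ hK₂ hanti₁₂ x y z,
      curvatureTensor_sub_comp_complexJacobi_eq_zero hK₁ hsq₁ hJ₃skew hantiJ₃ x y z]
  · obtain ⟨e, he, hne⟩ := (Submodule.ne_bot_iff Vp).1 hbot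
    have hK₁e : K₁ (K₁ e) = -e := by simpa using LinearMap.congr_fun hsq₁ e
    have hK₂e : K₂ (K₂ e) = -e := by simpa using LinearMap.congr_fun hsq₂ e
    have hJ₃e : J₃ (K₂ e) = K₁ e := by
      simp [hJ₃, Submodule.reflection_mem_subspace_eq_self (hinv₂ e he), hK₂K₁, hK₂e]
    have hval := curvatureTensor_sub_sub_add_apply hK₁ hK₂ hanti₁₂ hJ₃skew hantiJ₃ hK₁e hK₂e hJ₃e
    rw [← hRΨ', ← hR, hR0] at hval
    simp [hne] at hval

/-- On a quaternion module `V = V₊ ⊕ V₋` with `J₁ = K₁`, `J₂ = K₂`,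
`J₃ = ∓K₁K₂` on `V±`, the tensor `R = R_{J₂} - R_{J₁J₂} - R_{J₃} + R_{J₁J₃}`
has identically vanishing complex Jacobi operator with respect to `J = J₁`,
yet `R ≠ 0`. -/
theorem stmt_18 {V : Type*} [NormedAddCommGroup V] [InnerProductSpace ℝ V]
    [FiniteDimensional ℝ V]
    (hdim8 : 8 ≤ Module.finrank ℝ V) (hdim4 : 4 ∣ Module.finrank ℝ V)
    (K₁ K₂ K₃ : V →ₗ[ℝ] V)
    (hiso₁ : ∀ x y : V, ⟪K₁ x, K₁ y⟫ = ⟪x, y⟫)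
    (hiso₂ : ∀ x y : V, ⟪K₂ x, K₂ y⟫ = ⟪x, y⟫)
    (hiso₃ : ∀ x y : V, ⟪K₃ x, K₃ y⟫ = ⟪x, y⟫)
    (hsq₁ : K₁ ∘ₗ K₁ = -LinearMap.id) (hsq₂ : K₂ ∘ₗ K₂ = -LinearMap.id)
    (hsq₃ : K₃ ∘ₗ K₃ = -LinearMap.id)
    (hanti₁₂ : K₁ ∘ₗ K₂ + K₂ ∘ₗ K₁ = 0) (hanti₁₃ : K₁ ∘ₗ K₃ + K₃ ∘ₗ K₁ = 0)
    (hanti₂₃ : K₂ ∘ₗ K₃ + K₃ ∘ₗ K₂ = 0)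
    (hquat : K₁ ∘ₗ K₂ = K₃)
    -- the nontrivial orthogonal decomposition `V = V₊ ⊕ V₋` into
    -- quaternion-invariant subspaces
    (Vp : Submodule ℝ V) (hbot : Vp ≠ ⊥) (htop : Vp ≠ ⊤)
    (hinv₁ : ∀ x ∈ Vp, K₁ x ∈ Vp) (hinv₂ : ∀ x ∈ Vp, K₂ x ∈ Vp)
    (hinv₃ : ∀ x ∈ Vp, K₃ x ∈ Vp)
    (hinv₁' : ∀ x ∈ Vpᗮ, K₁ x ∈ Vpᗮ) (hinv₂' : ∀ x ∈ Vpᗮ, K₂ x ∈ Vpᗮ)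
    (hinv₃' : ∀ x ∈ Vpᗮ, K₃ x ∈ Vpᗮ)
    -- `J₃ = ∓ K₁K₂` on `V±`
    (J₃ : V →ₗ[ℝ] V)
    (hJ₃p : ∀ x ∈ Vp, J₃ x = -(K₁ (K₂ x)))
    (hJ₃m : ∀ x ∈ Vpᗮ, J₃ x = K₁ (K₂ x))
    (RΨ : (V →ₗ[ℝ] V) → V → V → V → V → ℝ)
    (hRΨ : ∀ (Ψ : V →ₗ[ℝ] V) (x y z t : V), RΨ Ψ x y z t =
      ⟪x, Ψ t⟫ * ⟪y, Ψ z⟫ - ⟪x, Ψ z⟫ * ⟪y, Ψ t⟫ - 2 * ⟪x, Ψ y⟫ * ⟪z, Ψ t⟫)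
    (R : V → V → V → V → ℝ)
    (hR : ∀ x y z t : V, R x y z t =
      RΨ K₂ x y z t - RΨ (K₁ ∘ₗ K₂) x y z t - RΨ J₃ x y z t + RΨ (K₁ ∘ₗ J₃) x y z t) :
    (∀ x : V, ‖x‖ = 1 → ∀ y z : V, R y x x z + R y (K₁ x) (K₁ x) z = 0) ∧ R ≠ 0 :=
  stmt_18_general K₁ K₂ hiso₁ hiso₂ hsq₁ hsq₂ hanti₁₂ Vp hbot hinv₁ hinv₂ hinv₁' hinv₂' J₃ hJ₃p hJ₃m
    RΨ hRΨ R hR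
end
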